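/- If a collection Q of probability measures on {0,1}^ℕ is non-separable in its means, then there exists γ > 0 such that Mean(Q) is infinitely sequentially γ-fat-shattered, i.e., for every depth d ∈ ℕ there exists a depth-d tree assignment that Mean(Q) γ-shatters. -/

import Mathlib

open MeasureTheory Filter

/-- The sup-distance `‖p − q‖_∞ = ⨆ j, |p j − q j|` between two vectors. -/
noncomputable def supDist {ι : Type*} (p q : ι → ℝ) : ℝ := ⨆ j, |p j - q j|

/-- The mean vector of a measure on `{0,1}^ι`: `Mean(μ)_j = μ {x | x j = 1}`. -/
noncomputable def meanVec {ι : Type*} (μ : Measure (ι → Bool)) : ι → ℝ :=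
  fun j => (μ {x | x j = true}).toReal

/-- A set `M ⊆ [0,1]^ι` has a countable `ε`-cover: a countable `D ⊆ [0,1]^ι` such that
every `q ∈ M` is within sup-distance `< ε` of some `p ∈ D`. -/
def HasCountableCover {ι : Type*} (M : Set (ι → ℝ)) (ε : ℝ) : Prop :=
  ∃ D : Set (ι → ℝ), D.Countable ∧ (∀ p ∈ D, ∀ j, p j ∈ Set.Icc (0 : ℝ) 1) ∧
    ∀ q ∈ M, ∃ p ∈ D, supDist q p < ε

/-- `M` γ-shatters the depth-`d` tree assignment with coordinate labels `idx` and values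
`r` (indexed by binary strings of length `< d`): for every `b ∈ {0,1}^d` there is `q ∈ M`
following the root-to-leaf path prescribed by `b` — at the node reached by the prefix
`(b_1,…,b_j)`, the coordinate `idx` of `q` is `≤ r − γ` if the next bit is `0` and
`≥ r + γ` if the next bit is `1`. -/
def FatShatters (M : Set (ℕ → ℝ)) (γ : ℝ) (d : ℕ)
    (idx : List Bool → ℕ) (r : List Bool → ℝ) : Prop :=
  ∀ b : Fin d → Bool, ∃ q ∈ M, ∀ j : Fin d,
    (b j = false → q (idx ((List.ofFn b).take j.1)) ≤ r ((List.ofFn b).take j.1) - γ) ∧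
    (b j = true → r ((List.ofFn b).take j.1) + γ ≤ q (idx ((List.ofFn b).take j.1)))

/-! Fix `ε > 0` such that `Mean(Q)` has no countable `ε`-cover, and put `γ = ε / 3`. A set
`A ⊆ [0,1]^ℕ` without a countable `ε`-cover splits at some coordinate `i` and threshold
`r ∈ (0,1)` into `{q_i ≤ r - γ}` and `{q_i ≥ r + γ}`, neither of which has a countable
`ε`-cover: otherwise, discarding the covered half at every rational threshold removes a set
with a countable cover and leaves one whose coordinates vary by at most `2γ < ε`, which a
single point covers. Splitting recursively yields `γ`-shattered trees of every depth. -/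

open Set

section Cover

variable {ι : Type*}

theorem hasCountableCover_empty (ε : ℝ) : HasCountableCover (∅ : Set (ι → ℝ)) ε :=
  ⟨∅, countable_empty, by simp, by simp⟩

theorem HasCountableCover.mono {A B : Set (ι → ℝ)} {ε : ℝ} (hAB : A ⊆ B)
    (hB : HasCountableCover B ε) : HasCountableCover A ε :=
  let ⟨D, hD, hD01, hcov⟩ := hB
  ⟨D, hD, hD01, fun q hq => hcov q (hAB hq)⟩

theorem HasCountableCover.union {A B : Set (ι → ℝ)} {ε : ℝ}
    (hA : HasCountableCover A ε) (hB : HasCountableCover B ε) :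
    HasCountableCover (A ∪ B) ε := by
  obtain ⟨D, hD, hD01, hcovA⟩ := hA
  obtain ⟨E, hE, hE01, hcovB⟩ := hB
  refine ⟨D ∪ E, hD.union hE, ?_, ?_⟩
  · rintro p (hp | hp)
    exacts [hD01 p hp, hE01 p hp]
  · rintro q (hq | hq)
    · obtain ⟨p, hp, hqp⟩ := hcovA q hq
      exact ⟨p, .inl hp, hqp⟩
    · obtain ⟨p, hp, hqp⟩ := hcovB q hq
      exact ⟨p, .inr hp, hqp⟩

theorem HasCountableCover.biUnion {κ : Type*} {S : Set κ} {B : κ → Set (ι → ℝ)} {ε : ℝ}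
    (hS : S.Countable) (hB : ∀ k ∈ S, HasCountableCover (B k) ε) :
    HasCountableCover (⋃ k ∈ S, B k) ε := by
  choose! D hD hD01 hcov using hB
  refine ⟨⋃ k ∈ S, D k, hS.biUnion hD, ?_, ?_⟩
  · intro p hp
    obtain ⟨k, hk, hpk⟩ := mem_iUnion₂.1 hp
    exact hD01 k hk p hpk
  · intro q hq
    obtain ⟨k, hk, hqk⟩ := mem_iUnion₂.1 hq
    obtain ⟨p, hp, hqp⟩ := hcov k hk q hqk
    exact ⟨p, mem_biUnion hk hp, hqp⟩

theorem nonempty_of_not_hasCountableCover {A : Set (ι → ℝ)} {ε : ℝ} (hA : ¬ HasCountableCover A ε) :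
    A.Nonempty :=
  nonempty_iff_ne_empty.2 fun h => hA (h ▸ hasCountableCover_empty ε)

theorem hasCountableCover_of_forall_sub_le {A : Set (ι → ℝ)} {δ ε : ℝ}
    (hA : A ⊆ univ.pi fun _ => Icc 0 1) (hδ : 0 ≤ δ) (hδε : δ < ε)
    (h : ∀ q ∈ A, ∀ q' ∈ A, ∀ j, q j - q' j ≤ δ) : HasCountableCover A ε := by
  rcases A.eq_empty_or_nonempty with rfl | ⟨q₀, hq₀⟩
  · exact hasCountableCover_empty ε
  refine ⟨{q₀}, countable_singleton q₀, ?_, fun q hq => ⟨q₀, rfl, ?_⟩⟩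
  · rintro p rfl j
    exact hA hq₀ j (mem_univ j)
  · calc supDist q q₀ ≤ δ :=
          Real.iSup_le (fun j => abs_sub_le_iff.2 ⟨h q hq q₀ hq₀ j, h q₀ hq₀ q hq j⟩) hδ
      _ < ε := hδε

theorem exists_split_of_not_hasCountableCover [Countable ι] {A : Set (ι → ℝ)}
    {γ ε : ℝ} (hγ : 0 < γ) (hγε : 2 * γ < ε) (hA : A ⊆ univ.pi fun _ => Icc 0 1)
    (hA_big : ¬ HasCountableCover A ε) :
    ∃ i r, r ∈ Ioo (0 : ℝ) 1 ∧ ¬ HasCountableCover (A ∩ {q | q i ≤ r - γ}) ε ∧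
      ¬ HasCountableCover (A ∩ {q | r + γ ≤ q i}) ε := by
  by_contra! h
  set lower : ι × ℚ → Set (ι → ℝ) := fun p => A ∩ {q | q p.1 ≤ p.2 - γ}
  set upper : ι × ℚ → Set (ι → ℝ) := fun p => A ∩ {q | p.2 + γ ≤ q p.1}
  set removed := (⋃ p ∈ {p | HasCountableCover (lower p) ε}, lower p) ∪
    ⋃ p ∈ {p | HasCountableCover (upper p) ε}, upper p
  have h_removed : HasCountableCover removed ε :=
    (HasCountableCover.biUnion (to_countable _) fun _ hp => hp).union
      (HasCountableCover.biUnion (to_countable _) fun _ hp => hp)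
  have h_rest : HasCountableCover (A \ removed) ε := by
    refine hasCountableCover_of_forall_sub_le (sdiff_subset.trans hA) (by positivity) hγε ?_
    rintro q ⟨hqA, hq⟩ q' ⟨hq'A, hq'⟩ i
    by_contra! hgap
    obtain ⟨s, hs₁, hs₂⟩ := exists_rat_btwn (by linarith : q' i + γ < q i - γ)
    have hs : (s : ℝ) ∈ Ioo 0 1 :=
      ⟨by linarith [(hA hq'A i (mem_univ i)).1], by linarith [(hA hqA i (mem_univ i)).2]⟩
    have hq'_low : q' ∈ lower (i, s) := ⟨hq'A, (by linarith : q' i ≤ s - γ)⟩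
    have hq_up : q ∈ upper (i, s) := ⟨hqA, (by linarith : s + γ ≤ q i)⟩
    by_cases hlow : HasCountableCover (lower (i, s)) ε
    · exact hq' (.inl (mem_biUnion (x := (i, s)) hlow hq'_low))
    · exact hq (.inr (mem_biUnion (x := (i, s)) (h i s hs hlow) hq_up))
  exact hA_big ((h_rest.union h_removed).mono (by rw [sdiff_union_self]; exact subset_union_left))

end Cover

@[simp]
def treeNode {α : Type*} (a : α) (t₀ t₁ : List Bool → α) : List Bool → α
  | [] => a
  | c :: s => cond c (t₁ s) (t₀ s)

theorem treeNode_mem {α : Type*} {S : Set α} {a : α} {t₀ t₁ : List Bool → α} {d : ℕ}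
    (ha : a ∈ S) (h₀ : ∀ s : List Bool, s.length < d → t₀ s ∈ S)
    (h₁ : ∀ s : List Bool, s.length < d → t₁ s ∈ S) :
    ∀ s : List Bool, s.length < d + 1 → treeNode a t₀ t₁ s ∈ S
  | [], _ => ha
  | false :: s, hs => h₀ s (by simpa using hs)
  | true :: s, hs => h₁ s (by simpa using hs)

theorem FatShatters.node {M : Set (ℕ → ℝ)} {γ r : ℝ} {d i : ℕ} {idx₀ idx₁ : List Bool → ℕ}
    {r₀ r₁ : List Bool → ℝ} (h₀ : FatShatters (M ∩ {q | q i ≤ r - γ}) γ d idx₀ r₀)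
    (h₁ : FatShatters (M ∩ {q | r + γ ≤ q i}) γ d idx₁ r₁) :
    FatShatters M γ (d + 1) (treeNode i idx₀ idx₁) (treeNode r r₀ r₁) := by
  intro b
  cases hb : b 0
  · obtain ⟨q, ⟨hqM, hqi⟩, hq⟩ := h₀ fun j => b j.succ
    refine ⟨q, hqM, Fin.cases ?_ fun j => ?_⟩
    · simpa [hb] using hqi
    · simpa [List.ofFn_succ, hb] using hq j
  · obtain ⟨q, ⟨hqM, hqi⟩, hq⟩ := h₁ fun j => b j.succ
    refine ⟨q, hqM, Fin.cases ?_ fun j => ?_⟩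
    · simpa [hb] using hqi
    · simpa [List.ofFn_succ, hb] using hq j

theorem exists_fatShatters_of_forall_split (P : Set (ℕ → ℝ) → Prop) {γ : ℝ}
    (hne : ∀ A, P A → A.Nonempty)
    (hsplit : ∀ A, P A → ∃ i r, r ∈ Ioo (0 : ℝ) 1 ∧
      P (A ∩ {q | q i ≤ r - γ}) ∧ P (A ∩ {q | r + γ ≤ q i})) :
    ∀ (d : ℕ) {A : Set (ℕ → ℝ)}, P A → ∃ (idx : List Bool → ℕ) (r : List Bool → ℝ),
      (∀ s : List Bool, s.length < d → r s ∈ Ioo (0 : ℝ) 1) ∧ FatShatters A γ d idx r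
  | 0, A, hA =>
    let ⟨q, hq⟩ := hne A hA
    ⟨fun _ => 0, fun _ => 1 / 2, fun _ hs => absurd hs (Nat.not_lt_zero _),
      fun _ => ⟨q, hq, fun j => j.elim0⟩⟩
  | d + 1, A, hA => by
    obtain ⟨i, r, hr, h₀, h₁⟩ := hsplit A hA
    obtain ⟨idx₀, r₀, hr₀, hsh₀⟩ := exists_fatShatters_of_forall_split P hne hsplit d h₀
    obtain ⟨idx₁, r₁, hr₁, hsh₁⟩ := exists_fatShatters_of_forall_split P hne hsplit d h₁
    exact ⟨treeNode i idx₀ idx₁, treeNode r r₀ r₁, treeNode_mem hr hr₀ hr₁, hsh₀.node hsh₁⟩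

theorem meanVec_mem_Icc {ι : Type*} (μ : Measure (ι → Bool)) [IsProbabilityMeasure μ] (j : ι) :
    meanVec μ j ∈ Icc 0 1 :=
  ⟨measureReal_nonneg, measureReal_le_one⟩

/-- If a collection `Q` of probability measures on `{0,1}^ℕ` is non-separable in its
means, then there is a `γ > 0` such that `Mean(Q)` is infinitely sequentially
`γ`-fat-shattered: for every depth `d` there is a depth-`d` tree assignment (with values
in `(0,1)`) that `Mean(Q)` `γ`-shatters. -/
theorem nonseparable_implies_fatShattered (Q : Set (Measure (ℕ → Bool)))
    (hQprob : ∀ μ ∈ Q, IsProbabilityMeasure μ)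
    (hnonsep : ¬ (∀ ε : ℝ, 0 < ε → HasCountableCover (meanVec '' Q) ε)) :
    ∃ γ : ℝ, 0 < γ ∧ ∀ d : ℕ, ∃ (idx : List Bool → ℕ) (r : List Bool → ℝ),
      (∀ s : List Bool, s.length < d → r s ∈ Set.Ioo (0 : ℝ) 1) ∧
      FatShatters (meanVec '' Q) γ d idx r := by
  push Not at hnonsep
  obtain ⟨ε, hε, hQ_big⟩ := hnonsep
  have hcube : meanVec '' Q ⊆ univ.pi fun _ => Icc 0 1 := by
    rintro _ ⟨μ, hμ, rfl⟩ j -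
    have := hQprob μ hμ
    exact meanVec_mem_Icc μ j
  let P : Set (ℕ → ℝ) → Prop := fun A => A ⊆ univ.pi (fun _ => Icc 0 1) ∧ ¬ HasCountableCover A ε
  refine ⟨ε / 3, by positivity, fun d =>
    exists_fatShatters_of_forall_split P (fun _ hA => nonempty_of_not_hasCountableCover hA.2) ?_ d
      ⟨hcube, hQ_big⟩⟩
  intro A ⟨hA, hA_big⟩
  obtain ⟨i, r, hr, h₀, h₁⟩ :=
    exists_split_of_not_hasCountableCover (γ := ε / 3) (by positivity) (by linarith) hA hA_big
  exact ⟨i, r, hr, ⟨inter_subset_left.trans hA, h₀⟩, ⟨inter_subset_left.trans hA, h₁⟩⟩
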